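/- arXiv:math/0006060 — 2 statements merged into one kernel-verified Lean document; each statement's English description precedes it below -/
import Mathlib

section
/- Let k be a field, let {U^n}_{n∈ℕ} be a locally finite inverse system of bounded-below cochain complexes of k-vector spaces with limit U = lim_n U^n (computed degreewise), and let W be a bounded cochain complex of k-vector spaces, i.e. there exists P with W_p = 0 for all |p| ≥ P. Then the canonical map colim_n Hom_{Ch}(U^n, W) → Hom_{Ch}(U, W), induced by precomposition with the projections U → U^n, is bijective, where Hom_{Ch} denotes the set of morphisms of cochain complexes. -/
open CategoryTheory CategoryTheory.Limits Opposite

universe u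

section Aux
variable {C : Type*} [Category C]

lemma aux_iso_map (G : ℕᵒᵖ ⥤ C) (n : ℕ)
    (h : ∀ m, n ≤ m → IsIso (G.map (homOfLE (Nat.le_succ m)).op)) :
    ∀ (m : ℕ) (hm : n ≤ m), IsIso (G.map (homOfLE hm).op) := by
  intro m
  induction m with
  | zero =>
      intro hm
      obtain rfl : n = 0 := Nat.le_zero.mp hm
      have : homOfLE hm = 𝟙 (0 : ℕ) := Subsingleton.elim _ _
      rw [this]
      simp only [op_id, Functor.map_id]
      infer_instance
  | succ m ih =>
      intro hm
      by_cases hnm : n ≤ m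
      · have : homOfLE hm = homOfLE hnm ≫ homOfLE (Nat.le_succ m) := Subsingleton.elim _ _
        rw [this, op_comp, G.map_comp]
        haveI := ih hnm
        haveI := h m hnm
        infer_instance
      · obtain rfl : n = m + 1 := by omega
        have : homOfLE hm = 𝟙 (m + 1 : ℕ) := Subsingleton.elim _ _
        rw [this]
        simp only [op_id, Functor.map_id]
        infer_instance

lemma aux_psi_eq (G : ℕᵒᵖ ⥤ C) (n : ℕ)
    (key : ∀ (m : ℕ) (hm : n ≤ m), IsIso (G.map (homOfLE hm).op))
    (b N N' : ℕ) (h1 : n ≤ N) (h2 : b ≤ N) (h1' : n ≤ N') (h2' : b ≤ N') (hN : N' ≤ N) :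
    @inv _ _ _ _ _ (key N h1) ≫ G.map (homOfLE h2).op =
    @inv _ _ _ _ _ (key N' h1') ≫ G.map (homOfLE h2').op := by
  letI := key N h1; letI := key N' h1'
  rw [IsIso.inv_comp_eq]
  have e1 : homOfLE h1 = homOfLE h1' ≫ homOfLE hN := Subsingleton.elim _ _
  have e2 : homOfLE h2 = homOfLE h2' ≫ homOfLE hN := Subsingleton.elim _ _
  rw [e1, e2, op_comp, op_comp, G.map_comp, G.map_comp]
  simp

lemma aux_pi_iso (G : ℕᵒᵖ ⥤ C) (d : Cone G) (hd : IsLimit d) (n : ℕ)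
    (h : ∀ m, n ≤ m → IsIso (G.map (homOfLE (Nat.le_succ m)).op)) :
    IsIso (d.π.app (op n)) := by
  have key := aux_iso_map G n h
  let ψ : ∀ m : ℕ, G.obj (op n) ⟶ G.obj (op m) := fun m =>
    @inv _ _ _ _ _ (key _ (le_max_left n m)) ≫ G.map (homOfLE (le_max_right n m)).op
  have hψeq : ∀ (b N : ℕ) (h1 : n ≤ N) (h2 : b ≤ N),
      ψ b = @inv _ _ _ _ _ (key N h1) ≫ G.map (homOfLE h2).op := by
    intro b N h1 h2
    rcases le_total N (max n b) with hle | hle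
    · exact (aux_psi_eq G n key b (max n b) N (le_max_left n b) (le_max_right n b) h1 h2 hle)
    · exact (aux_psi_eq G n key b N (max n b) h1 h2 (le_max_left n b) (le_max_right n b) hle).symm
  have hψnat : ∀ (a b : ℕ) (hba : b ≤ a), ψ a ≫ G.map (homOfLE hba).op = ψ b := by
    intro a b hba
    have e : (homOfLE (le_max_right n a)).op ≫ (homOfLE hba).op
        = (homOfLE (hba.trans (le_max_right n a))).op := by
      rw [← op_comp]; congr 1
    show (_ ≫ G.map (homOfLE (le_max_right n a)).op) ≫ G.map (homOfLE hba).op = ψ b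
    rw [Category.assoc, ← G.map_comp, e]
    exact (hψeq b (max n a) (le_max_left n a) (hba.trans (le_max_right n a))).symm
  have hψn : ψ n = 𝟙 _ := by
    show @inv _ _ _ _ _ (key _ (le_max_left n n)) ≫ G.map (homOfLE (le_max_right n n)).op = 𝟙 _
    have : homOfLE (le_max_right n n) = homOfLE (le_max_left n n) := Subsingleton.elim _ _
    rw [this]
    exact IsIso.inv_hom_id _
  let dn : Cone G :=
    { pt := G.obj (op n)
      π :=
        { app := fun X => ψ X.unop
          naturality := by
            intro X Y f
            have hf : f = (homOfLE (leOfHom f.unop)).op := by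
              rw [← f.op_unop]; congr 1
            simp only [Functor.const_obj_obj, Functor.const_obj_map, Category.id_comp]
            rw [hf]
            exact (hψnat X.unop Y.unop (leOfHom f.unop)).symm } }
  have hfac : ∀ X, hd.lift dn ≫ d.π.app X = ψ X.unop := fun X => hd.fac dn X
  refine ⟨hd.lift dn, ?_, ?_⟩
  swap
  · rw [hfac (op n), hψn]
  · apply hd.hom_ext
    intro X
    obtain ⟨m⟩ := X
    rw [Category.assoc, hfac (op m), Category.id_comp]
    have hw : d.π.app (op (max n m)) ≫ G.map (homOfLE (le_max_left n m)).op
        = d.π.app (op n) := d.w _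
    show d.π.app (op n) ≫ (_ ≫ G.map (homOfLE (le_max_right n m)).op) = d.π.app (op m)
    rw [← hw]
    letI := key _ (le_max_left n m)
    have hw2 : d.π.app (op (max n m)) ≫ G.map (homOfLE (le_max_right n m)).op
        = d.π.app (op m) := d.w _
    rw [Category.assoc, IsIso.hom_inv_id_assoc, hw2]
end Aux


/-- Let `k` be a field, `{U^n}` a locally finite inverse system of
bounded-below cochain complexes of `k`-vector spaces with (degreewise) limit `U`, and `W` a
bounded cochain complex.  Then the canonical map
`colim_n Hom_{Ch}(U^n, W) → Hom_{Ch}(U, W)` (precomposition with the projections `U → U^n`)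
is bijective; elementwise: every morphism `U → W` factors through some projection `U → U^n`
(surjectivity), and two morphisms `U^n → W` that agree after precomposition with the
projection already agree after precomposition with some transition map `U^m → U^n`, `m ≥ n`
(injectivity). -/
theorem hom_from_locally_finite_limit
    (k : Type u) [Field k] (F : ℕᵒᵖ ⥤ CochainComplex (ModuleCat.{u} k) ℤ)
    -- the system is locally finite
    (hlocfin : ∀ j : ℤ, ∃ n₀ : ℕ, ∀ n ≥ n₀, ∀ i ≤ j,
      IsIso ((F.map (homOfLE (Nat.le_succ n)).op).f i))
    -- each `U^n` is bounded below
    (hFbdd : ∀ n : ℕ, ∃ a : ℤ, ∀ p < a, IsZero ((F.obj (op n)).X p))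
    -- `U` is a (degreewise) limit of the system
    (c : Cone F) (hc : IsLimit c)
    -- `W` is a bounded complex
    (W : CochainComplex (ModuleCat.{u} k) ℤ)
    (hW : ∃ P : ℤ, ∀ p : ℤ, P ≤ |p| → IsZero (W.X p)) :
    -- surjectivity of the canonical map
    (∀ h : c.pt ⟶ W, ∃ (n : ℕ) (g : F.obj (op n) ⟶ W), c.π.app (op n) ≫ g = h) ∧
    -- injectivity of the canonical map
    (∀ (n : ℕ) (g g' : F.obj (op n) ⟶ W),
      c.π.app (op n) ≫ g = c.π.app (op n) ≫ g' →
      ∃ (m : ℕ) (hm : n ≤ m),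
        F.map (homOfLE hm).op ≫ g = F.map (homOfLE hm).op ≫ g') := by
  obtain ⟨P₀, hP₀⟩ := hW
  set P : ℤ := max P₀ 1 with hPdef
  have hWz : ∀ p : ℤ, P < p → IsZero (W.X p) := by
    intro p hp
    refine hP₀ p ?_
    have h1 : (1 : ℤ) ≤ P := le_max_right _ _
    have : |p| = p := abs_of_pos (by omega)
    rw [this]
    have : P₀ ≤ P := le_max_left _ _
    omega
  obtain ⟨n₀, hn₀⟩ := hlocfin P
  -- projections are isos in low degrees for n ≥ n₀
  have hproj : ∀ (n : ℕ), n₀ ≤ n → ∀ i : ℤ, i ≤ P → IsIso ((c.π.app (op n)).f i) := by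
    intro n hn i hi
    exact aux_pi_iso (F ⋙ HomologicalComplex.eval (ModuleCat.{u} k) (ComplexShape.up ℤ) i)
      ((HomologicalComplex.eval (ModuleCat.{u} k) (ComplexShape.up ℤ) i).mapCone c)
      (isLimitOfPreserves _ hc) n
      (fun m hm => hn₀ m (hn.trans hm) i hi)
  constructor
  · -- surjectivity
    intro h
    have hiso := hproj n₀ le_rfl
    refine ⟨n₀, ⟨fun i => dite (i ≤ P) (fun hi => @inv _ _ _ _ _ (hiso i hi) ≫ h.f i) (fun _ => 0), ?_⟩, ?_⟩
    · intro i j hij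
      by_cases hj : j ≤ P
      · have hi : i ≤ P := by simp only [ComplexShape.up_Rel] at hij; omega
        rw [dif_pos hi, dif_pos hj]
        letI := hiso i hi; letI := hiso j hj
        rw [← cancel_epi ((c.π.app (op n₀)).f i)]
        simp only [← Category.assoc]
        rw [IsIso.hom_inv_id, Category.id_comp, h.comm i j, (c.π.app (op n₀)).comm i j]
        simp
      · exact (hWz j (by omega)).eq_of_tgt _ _
    · apply HomologicalComplex.hom_ext
      intro i
      rw [HomologicalComplex.comp_f]
      by_cases hi : i ≤ P
      · dsimp only
        rw [dif_pos hi]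
        letI := hiso i hi
        rw [← Category.assoc, IsIso.hom_inv_id, Category.id_comp]
      · exact (hWz i (by omega)).eq_of_tgt _ _
  · -- injectivity
    intro n g g' hgg'
    refine ⟨max n n₀, le_max_left _ _, ?_⟩
    apply HomologicalComplex.hom_ext
    intro i
    rw [HomologicalComplex.comp_f, HomologicalComplex.comp_f]
    by_cases hi : i ≤ P
    · letI := hproj (max n n₀) (le_max_right _ _) i hi
      rw [← cancel_epi ((c.π.app (op (max n n₀))).f i)]
      have hw : c.π.app (op (max n n₀)) ≫ F.map (homOfLE (le_max_left n n₀)).op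
          = c.π.app (op n) := c.w _
      have hw' : (c.π.app (op (max n n₀))).f i ≫ (F.map (homOfLE (le_max_left n n₀)).op).f i
          = (c.π.app (op n)).f i := by rw [← HomologicalComplex.comp_f, hw]
      have hcomp := congrArg (fun q => HomologicalComplex.Hom.f q i) hgg'
      simp only [HomologicalComplex.comp_f] at hcomp
      rw [← Category.assoc, ← Category.assoc, hw', hcomp]
    · exact (hWz i (by omega)).eq_of_tgt _ _
end

section
/- Let A be an abelian category with countable products admitting a derived category D(A), and let X be a bounded-below cochain complex over A (X^p = 0 for all p below some bound) all of whose components X^p are injective objects of A. Then X is a closed object, i.e. for every cochain complex M over A the map Hom_{K(A)}(M, X) → Hom_{D(A)}(M, X) induced by the localization functor is bijective. -/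
open CategoryTheory CategoryTheory.Limits

universe v u

/-- A cochain complex `Y` over an abelian category `A` is *closed* if, for every cochain
complex `M`, the localization functor induces a bijection
`Hom_{K(A)}(M, Y) ≅ Hom_{D(A)}(M, Y)`. -/
def IsClosedComplex {A : Type u} [Category.{v} A] [Abelian A] [HasDerivedCategory A]
    (Y : CochainComplex A ℤ) : Prop :=
  ∀ M : CochainComplex A ℤ,
    Function.Bijective
      (fun f : (HomotopyCategory.quotient A (ComplexShape.up ℤ)).obj M ⟶
          (HomotopyCategory.quotient A (ComplexShape.up ℤ)).obj Y =>
        DerivedCategory.Qh.map f)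

namespace IsClosedAux

variable {A : Type u} [Category.{v} A] [Abelian A]

lemma d_comp_XIsoOfEq_hom (K : CochainComplex A ℤ) (p : ℤ) {q q' : ℤ} (h : q = q') :
    K.d p q ≫ (K.XIsoOfEq h).hom = K.d p q' := by
  subst h
  simp [HomologicalComplex.XIsoOfEq]

section NullHomotopy

variable (X K : CochainComplex A ℤ) (f : K ⟶ X) (a : ℤ)
  (hbdd : ∀ p < a, IsZero (X.X p)) (hinj : ∀ p : ℤ, Injective (X.X p))
  (hK : ∀ n : ℤ, K.ExactAt n)

/-- The type of partial null-homotopy data at degree `p`. -/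
abbrev HtpyData (p : ℤ) : Type _ :=
  {u : (K.X p ⟶ X.X (p - 1)) × (K.X (p + 1) ⟶ X.X p) //
    f.f p = u.1 ≫ X.d (p - 1) p + K.d p (p + 1) ≫ u.2}

/-- The inductive step constructing the null-homotopy. -/
noncomputable def step (p : ℤ) (prev : HtpyData X K f (p - 1)) : HtpyData X K f p :=
  have _i : Injective (X.X p) := hinj p
  have e : p = p - 1 + 1 := by omega
  have hg : (K.sc' (p - 1) p (p + 1)).f ≫
      (f.f p - ((K.XIsoOfEq e).hom ≫ prev.1.2) ≫ X.d (p - 1) p) = 0 := by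
    have hcomm : K.d (p - 1) p ≫ f.f p = f.f (p - 1) ≫ X.d (p - 1) p := (f.comm (p - 1) p).symm
    have hu : K.d (p - 1) p ≫ (K.XIsoOfEq e).hom = K.d (p - 1) (p - 1 + 1) :=
      d_comp_XIsoOfEq_hom K _ e
    show K.d (p - 1) p ≫ _ = 0
    have h3 := congrArg (fun t => t ≫ X.d (p - 1) p) prev.2
    rw [Preadditive.comp_sub, hcomm, Category.assoc, ← Category.assoc (K.d (p - 1) p), hu, h3,
      Preadditive.add_comp]
    simp
  have hS : (K.sc' (p - 1) p (p + 1)).Exact :=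
    (K.exactAt_iff' (p - 1) p (p + 1) (CochainComplex.prev ℤ p) (CochainComplex.next ℤ p)).1
      (hK p)
  ⟨((K.XIsoOfEq e).hom ≫ prev.1.2, hS.descToInjective _ hg), by
    have h2 := hS.comp_descToInjective _ hg
    rw [show (K.sc' (p - 1) p (p + 1)).g = K.d p (p + 1) from rfl] at h2
    dsimp only
    erw [h2]
    abel⟩

/-- The null-homotopy data, constructed by induction on degrees. -/
noncomputable def zAux (p : ℤ) : HtpyData X K f p :=
  if hp : p < a then
    ⟨(0, 0), by
      have := (hbdd p hp).eq_of_tgt (f.f p)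
        ((0 : K.X p ⟶ X.X (p - 1)) ≫ X.d (p - 1) p +
          K.d p (p + 1) ≫ (0 : K.X (p + 1) ⟶ X.X p))
      exact this⟩
  else
    step X K f hinj hK p (zAux (p - 1))
termination_by (p - a + 1).toNat
decreasing_by
  simp_wf
  omega

lemma zAux_congr (p q : ℤ) (h : p = q) :
    (zAux X K f a hbdd hinj hK p).1.2 =
      (K.XIsoOfEq (show p + 1 = q + 1 by rw [h])).hom ≫
        (zAux X K f a hbdd hinj hK q).1.2 ≫ (X.XIsoOfEq h.symm).hom := by
  subst h
  simp [HomologicalComplex.XIsoOfEq]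

lemma zAux_d (i : ℤ) :
    K.d i (i + 1) ≫ (zAux X K f a hbdd hinj hK (i + 1)).1.1 ≫
        (X.XIsoOfEq (show i + 1 - 1 = i by omega)).hom =
      K.d i (i + 1) ≫ (zAux X K f a hbdd hinj hK i).1.2 := by
  rw [zAux]
  split_ifs with h
  · exact (hbdd i (by omega)).eq_of_tgt _ _
  · dsimp only [step]
    rw [zAux_congr X K f a hbdd hinj hK (i + 1 - 1) i (by omega)]
    simp [HomologicalComplex.XIsoOfEq, eqToHom_map]

/-- Any map from an acyclic complex to a bounded-below complex of injectives
is null-homotopic. -/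
noncomputable def nullHomotopy : Homotopy f 0 where
  hom i j :=
    if h : j + 1 = i then
      (zAux X K f a hbdd hinj hK i).1.1 ≫ (X.XIsoOfEq (show i - 1 = j by omega)).hom
    else 0
  zero i j hij := dif_neg (by simpa using hij)
  comm i := by
    rw [dNext_eq _ (show (ComplexShape.up ℤ).Rel i (i + 1) by simp),
      prevD_eq _ (show (ComplexShape.up ℤ).Rel (i - 1) i by simp)]
    rw [dif_pos rfl, dif_pos (show (i - 1) + 1 = i by omega)]
    rw [← Category.assoc (K.d i (i + 1)), Category.assoc _ _ ((X.XIsoOfEq _).hom),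
      ← Category.assoc (K.d i (i + 1))]
    rw [Category.assoc, zAux_d X K f a hbdd hinj hK i]
    have h := (zAux X K f a hbdd hinj hK i).2
    simp only [HomologicalComplex.XIsoOfEq, eqToIso.hom, eqToHom_refl, Category.comp_id,
      HomologicalComplex.zero_f, add_zero]
    exact h.trans (add_comm _ _)

end NullHomotopy

end IsClosedAux

/-- Over an abelian category `A` with countable products admitting a derived
category, every bounded-below cochain complex with injective components is a closed object:
for every complex `M`, `Hom_{K(A)}(M, X) → Hom_{D(A)}(M, X)` is bijective. -/
theorem isClosed_of_boundedBelow_injective (A : Type u) [Category.{v} A] [Abelian A]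
    [HasCountableProducts A] [HasDerivedCategory A]
    (X : CochainComplex A ℤ)
    (hbdd : ∃ a : ℤ, ∀ p < a, Limits.IsZero (X.X p))
    (hinj : ∀ p : ℤ, Injective (X.X p)) :
    IsClosedComplex X := by
  obtain ⟨a, ha⟩ := hbdd
  intro M
  set W := (HomotopyCategory.subcategoryAcyclic A).trW with hW
  set X' := (HomotopyCategory.quotient A (ComplexShape.up ℤ)).obj X with hX'
  -- every morphism from an acyclic object to `X'` vanishes
  have hzero : ∀ (Z : HomotopyCategory A (ComplexShape.up ℤ)),
      (HomotopyCategory.subcategoryAcyclic A) Z → ∀ (g : Z ⟶ X'), g = 0 := by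
    rintro ⟨K⟩ hZ g
    obtain ⟨φ, rfl⟩ := (HomotopyCategory.quotient A (ComplexShape.up ℤ)).map_surjective g
    have hK : ∀ n, K.ExactAt n :=
      (HomotopyCategory.quotient_obj_mem_subcategoryAcyclic_iff_exactAt K).1 hZ
    have H : Homotopy φ 0 := IsClosedAux.nullHomotopy X K φ a ha hinj hK
    rw [HomotopyCategory.eq_of_homotopy _ _ H, Functor.map_zero]
    rfl
  -- `X'` is local with respect to quasi-isomorphisms
  have hlocal : ∀ ⦃P Q : HomotopyCategory A (ComplexShape.up ℤ)⦄ (s : P ⟶ Q), W s →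
      Function.Bijective (fun (g : Q ⟶ X') => s ≫ g) := by
    rintro P Q s ⟨Z, g, h, hT, hZ⟩
    constructor
    · intro g₁ g₂ hg
      dsimp at hg
      rw [← sub_eq_zero]
      obtain ⟨k, hk⟩ := Pretriangulated.Triangle.yoneda_exact₂ _ hT (g₁ - g₂)
        (by show s ≫ (g₁ - g₂) = 0; rw [Preadditive.comp_sub, hg, sub_self])
      rw [hk, hzero Z hZ k]
      exact comp_zero
    · intro e
      obtain ⟨k, hk⟩ := Pretriangulated.Triangle.yoneda_exact₂ _
        (Pretriangulated.inv_rot_of_distTriang _ hT) e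
        (hzero _ ((HomotopyCategory.subcategoryAcyclic A).le_shift (-1) Z hZ) _)
      exact ⟨k, hk.symm⟩
  constructor
  · intro f₁ f₂ hf
    dsimp at hf
    rw [MorphismProperty.map_eq_iff_postcomp DerivedCategory.Qh W f₁ f₂] at hf
    obtain ⟨Z, s, hs, fac⟩ := hf
    obtain ⟨r, hr⟩ := (hlocal s hs).2 (𝟙 X')
    dsimp at hr
    have : f₁ ≫ s ≫ r = f₂ ≫ s ≫ r := by
      rw [← Category.assoc, ← Category.assoc, fac]
    simpa only [hr, Category.comp_id] using this
  · intro F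
    obtain ⟨φ, hφ⟩ := Localization.exists_leftFraction DerivedCategory.Qh W F
    obtain ⟨t, ht⟩ := (hlocal φ.s φ.hs).2 (𝟙 X')
    dsimp at ht
    refine ⟨φ.f ≫ t, ?_⟩
    haveI : IsIso (DerivedCategory.Qh.map φ.s) := Localization.inverts DerivedCategory.Qh W _ φ.hs
    have h1 : DerivedCategory.Qh.map φ.s ≫ DerivedCategory.Qh.map t = 𝟙 _ := by
      rw [← Functor.map_comp, ht]
      simp
    have h2 : DerivedCategory.Qh.map t = inv (DerivedCategory.Qh.map φ.s) :=
      IsIso.eq_inv_of_hom_inv_id h1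
    dsimp
    rw [hφ, Functor.map_comp, h2]
    rfl
end
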